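/- Under the stated setup and algorithmic hypotheses, every limit point (A*, Z*, H*) of the sequence (A^k, Z^k, H^k) satisfies Z* ∈ S₁, H* ∈ S₂, and the following coordinatewise minimality conditions: f(A*, Z*, H*) ≤ f(A*, Z*, H) for every H ∈ S₂; f(A*, Z*, H*) ≤ f(A, Z*, H*) for every A ∈ ℝ^{n×n}; and f(A*, Z*, H*) ≤ f(A*, Z, H*) for every Z ∈ S₁. -/

import Mathlib

open Matrix BigOperators Filter Topology

/-- Frobenius norm of a real matrix. -/
noncomputable def frob {m n : ℕ} (W : Matrix (Fin m) (Fin n) ℝ) : ℝ :=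
  Real.sqrt (∑ i, ∑ j, (W i j) ^ 2)

/-- Laplacian `L_S = D_S - (|S| + |S|ᵀ)/2` of a square real matrix `S`. -/
noncomputable def lap {n : ℕ} (S : Matrix (Fin n) (Fin n) ℝ) : Matrix (Fin n) (Fin n) ℝ :=
  Matrix.diagonal (fun i => ∑ j, (|S i j| + |S j i|) / 2)
    - (1 / 2 : ℝ) • (S.map (fun x => |x|) + (S.map (fun x => |x|))ᵀ)

/-- The objective `f(A, Z, H)` of the penalized DGSL model. -/
noncomputable def fObj {n k d : ℕ} (X : Matrix (Fin d) (Fin n) ℝ)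
    (W M C : Matrix (Fin n) (Fin n) ℝ) (lam lamZ lamM a1 a2 : ℝ)
    (A Z : Matrix (Fin n) (Fin n) ℝ) (H : Matrix (Fin k) (Fin n) ℝ) : ℝ :=
  (1 / 2) * frob (X - X * A) ^ 2 + (lam / 2) * frob (A - Z) ^ 2
    + lamZ * (∑ i, ∑ j, |Z i j|)
    + a1 * trace (H * lap Z * Hᵀ) / trace (H * lap C * Hᵀ)
    + a2 * trace (H * (lap W + lamM • lap M) * Hᵀ) / trace (H * lap C * Hᵀ)

/-!
Every sweep of the alternating minimization decreases `f`, so the values `f(A^t, Z^t, H^t)`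
decrease, and by continuity along the subsequence they converge to `f(A*, Z*, H*)`.
In `A`, and in `Z` on `S₁`, the objective is `λ`-strongly convex: the term `λ/2 ‖A - Z‖²` is,
and the rest is convex, since `‖Z‖₁` is and `Tr(H L_Z Hᵀ) = ½ Σᵢⱼ |zᵢⱼ| ‖hᵢ - hⱼ‖²`.
Hence the `A`- and `Z`-updates decrease `f` by at least `λ/4` times their squared step, so
consecutive iterates merge and the iterates just before the subsequence have the same limit.
Passing to the limit in the minimality of each update, on the closed sets `S₁` and `S₂`, gives
the three inequalities.
-/

lemma frob_sq {m n : ℕ} (W : Matrix (Fin m) (Fin n) ℝ) : frob W ^ 2 = ∑ i, ∑ j, W i j ^ 2 :=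
  Real.sq_sqrt <| Finset.sum_nonneg fun _ _ => Finset.sum_nonneg fun _ _ => sq_nonneg _

section Frobenius

attribute [local instance] Matrix.frobeniusNormedAddCommGroup

lemma frob_eq_norm {m n : ℕ} (W : Matrix (Fin m) (Fin n) ℝ) : frob W = ‖W‖ := by
  simp only [frobenius_norm_def, frob, Real.sqrt_eq_rpow, Real.norm_eq_abs, Real.rpow_two,
    sq_abs]

lemma tendsto_of_tendsto_frob_sub {m n : ℕ} {ι : Type*} {l : Filter ι}
    {B : ι → Matrix (Fin m) (Fin n) ℝ} {B₀ : Matrix (Fin m) (Fin n) ℝ}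
    (h : Tendsto (fun j => frob (B j - B₀)) l (𝓝 0)) : Tendsto B l (𝓝 B₀) := by
  simp only [frob_eq_norm] at h
  exact tendsto_iff_norm_sub_tendsto_zero.mpr h

end Frobenius

@[fun_prop]
lemma continuous_frob {m n : ℕ} : Continuous (frob : Matrix (Fin m) (Fin n) ℝ → ℝ) := by
  unfold frob
  fun_prop

@[fun_prop]
lemma continuous_lap {n : ℕ} : Continuous (lap : Matrix (Fin n) (Fin n) ℝ → _) := by
  unfold lap
  fun_prop

lemma frob_sq_midpoint {m n : ℕ} (U V : Matrix (Fin m) (Fin n) ℝ) :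
    frob ((1 / 2 : ℝ) • (U + V)) ^ 2
      = frob U ^ 2 / 2 + frob V ^ 2 / 2 - frob (U - V) ^ 2 / 4 := by
  simp only [frob_sq, Finset.sum_div, ← Finset.sum_add_distrib, ← Finset.sum_sub_distrib]
  refine Finset.sum_congr rfl fun i _ => Finset.sum_congr rfl fun j _ => ?_
  simp only [Matrix.smul_apply, Matrix.add_apply, Matrix.sub_apply, smul_eq_mul]
  ring

lemma sum_abs_midpoint_mul_le {m n : ℕ} (U V : Matrix (Fin m) (Fin n) ℝ)
    {w : Fin m → Fin n → ℝ} (hw : ∀ i j, 0 ≤ w i j) :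
    ∑ i, ∑ j, |((1 / 2 : ℝ) • (U + V)) i j| * w i j
      ≤ (∑ i, ∑ j, |U i j| * w i j) / 2 + (∑ i, ∑ j, |V i j| * w i j) / 2 := by
  simp only [Finset.sum_div, ← Finset.sum_add_distrib]
  refine Finset.sum_le_sum fun i _ => Finset.sum_le_sum fun j _ => ?_
  have habs : |((1 / 2 : ℝ) • (U + V)) i j| ≤ |U i j| / 2 + |V i j| / 2 := by
    simp only [Matrix.smul_apply, Matrix.add_apply, smul_eq_mul, abs_mul,
      abs_of_pos (one_half_pos : (0 : ℝ) < 1 / 2)]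
    linarith [abs_add_le (U i j) (V i j)]
  linarith [mul_le_mul_of_nonneg_right habs (hw i j)]

lemma lap_apply {n : ℕ} (S : Matrix (Fin n) (Fin n) ℝ) (i j : Fin n) :
    lap S i j
      = (if i = j then ∑ t, (|S i t| + |S t i|) / 2 else 0) - (|S i j| + |S j i|) / 2 := by
  simp only [lap, Matrix.sub_apply, diagonal_apply, Matrix.smul_apply, Matrix.add_apply,
    transpose_apply, map_apply, smul_eq_mul]
  ring

lemma trace_mul_lap_mul_transpose {n k : ℕ} (H : Matrix (Fin k) (Fin n) ℝ)
    (S : Matrix (Fin n) (Fin n) ℝ) :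
    trace (H * lap S * Hᵀ) = ∑ i, ∑ j, |S i j| * ∑ l, (H l i - H l j) ^ 2 / 2 := by
  obtain ⟨G, hG⟩ : ∃ G, G = Hᵀ * H := ⟨_, rfl⟩
  have hG_symm : ∀ i j, G j i = G i j := fun i j => by
    simp only [hG, mul_apply, transpose_apply, mul_comm]
  have hdist : ∀ i j, ∑ l, (H l i - H l j) ^ 2 / 2 = (G i i + G j j) / 2 - G i j := by
    intro i j
    simp only [hG, mul_apply, transpose_apply, ← Finset.sum_add_distrib, Finset.sum_div,
      ← Finset.sum_sub_distrib]
    exact Finset.sum_congr rfl fun l _ => by ring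
  have hdiag : ∑ i, ∑ j, (if i = j then ∑ t, (|S i t| + |S t i|) / 2 else 0) * G j i
      = ∑ i, ∑ j, (|S i j| + |S j i|) / 2 * G i i := by
    simp [ite_mul, Finset.sum_mul]
  rw [trace_mul_cycle, trace_mul_comm, ← hG]
  simp only [trace, diag, mul_apply, lap_apply, sub_mul, Finset.sum_sub_distrib, hdiag, hdist]
  -- termwise, the difference of the two sides is antisymmetric in `(i, j)`
  have hterm : ∀ i j, (|S i j| + |S j i|) / 2 * G i i - (|S i j| + |S j i|) / 2 * G j i
      - |S i j| * ((G i i + G j j) / 2 - G i j)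
      = (|S j i| * G i i + |S i j| * G i j) / 2 - (|S i j| * G j j + |S j i| * G j i) / 2 := by
    intro i j
    rw [hG_symm j i]
    ring
  rw [← sub_eq_zero]
  simp only [← Finset.sum_sub_distrib, hterm]
  simp only [Finset.sum_sub_distrib]
  rw [Finset.sum_comm (f := fun i j => (|S i j| * G j j + |S j i| * G j i) / 2), sub_self]

lemma trace_mul_lap_mul_transpose_midpoint_le {n k : ℕ} (H : Matrix (Fin k) (Fin n) ℝ)
    (Z Z' : Matrix (Fin n) (Fin n) ℝ) :
    trace (H * lap ((1 / 2 : ℝ) • (Z + Z')) * Hᵀ)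
      ≤ trace (H * lap Z * Hᵀ) / 2 + trace (H * lap Z' * Hᵀ) / 2 := by
  simp only [trace_mul_lap_mul_transpose]
  exact sum_abs_midpoint_mul_le Z Z' fun i j =>
    Finset.sum_nonneg fun l _ => div_nonneg (sq_nonneg _) zero_le_two

lemma tendsto_sub_succ_of_sq_frob_le {m n : ℕ} {B : ℕ → Matrix (Fin m) (Fin n) ℝ} {F : ℕ → ℝ}
    {c L : ℝ} (hc : 0 < c) (hF : Tendsto F atTop (𝓝 L))
    (h : ∀ t, c * frob (B t - B (t + 1)) ^ 2 ≤ F t - F (t + 1)) :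
    Tendsto (fun t => B t - B (t + 1)) atTop (𝓝 0) := by
  have hdecr : Tendsto (fun t => (F t - F (t + 1)) / c) atTop (𝓝 0) := by
    simpa using (hF.sub (hF.comp (tendsto_add_atTop_nat 1))).div_const c
  have hbound : ∀ t, frob (B t - B (t + 1) - 0) ≤ √((F t - F (t + 1)) / c) := fun t => by
    have hsq : frob (B t - B (t + 1)) ^ 2 ≤ (F t - F (t + 1)) / c := by
      rw [le_div_iff₀ hc]
      linarith [h t]
    rw [sub_zero]
    exact (le_abs_self _).trans (Real.abs_le_sqrt hsq)
  exact tendsto_of_tendsto_frob_sub <| squeeze_zero (fun _ => Real.sqrt_nonneg _) hbound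
    (by simpa using hdecr.sqrt)

lemma tendsto_of_tendsto_sub_succ {E : Type*} [TopologicalSpace E] [AddGroup E]
    [IsTopologicalAddGroup E] {B : ℕ → E} {ψ : ℕ → ℕ} {b : E}
    (hB : Tendsto (fun t => B t - B (t + 1)) atTop (𝓝 0)) (hψ : Tendsto ψ atTop atTop)
    (hBψ : Tendsto (fun j => B (ψ j + 1)) atTop (𝓝 b)) :
    Tendsto (fun j => B (ψ j)) atTop (𝓝 b) := by
  simpa using (hB.comp hψ).add hBψ

lemma StrictMono.exists_add_one_eq {φ : ℕ → ℕ} (hφ : StrictMono φ) :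
    ∃ ψ : ℕ → ℕ, Tendsto ψ atTop atTop ∧ ∀ j, ψ j + 1 = φ (j + 1) := by
  have hle : ∀ j, j + 1 ≤ φ (j + 1) := fun j => hφ.le_apply
  exact ⟨fun j => φ (j + 1) - 1,
    tendsto_atTop_mono (fun j => show j ≤ φ (j + 1) - 1 by have := hle j; omega) tendsto_id,
    fun j => show φ (j + 1) - 1 + 1 = φ (j + 1) by have := hle j; omega⟩

lemma isClosed_orthonormal {k n : ℕ} :
    IsClosed {H : Matrix (Fin k) (Fin n) ℝ | H * Hᵀ = 1} :=
  isClosed_eq (by fun_prop) continuous_const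

lemma isClosed_diag_eq_zero {n : ℕ} :
    IsClosed {Z : Matrix (Fin n) (Fin n) ℝ | ∀ i, Z i i = 0} := by
  simp only [Set.ofPred_forall]
  exact isClosed_iInter fun i => isClosed_eq (by fun_prop) continuous_const

section Objective

variable {n k d : ℕ} (X : Matrix (Fin d) (Fin n) ℝ) (W M C : Matrix (Fin n) (Fin n) ℝ)
  (lam lamZ lamM a1 a2 : ℝ)

local notation "𝒇" => fObj X W M C lam lamZ lamM a1 a2

lemma continuousAt_fObj {A Z : Matrix (Fin n) (Fin n) ℝ} {H : Matrix (Fin k) (Fin n) ℝ}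
    (hC : trace (H * lap C * Hᵀ) ≠ 0) :
    ContinuousAt (fun p : Matrix (Fin n) (Fin n) ℝ × Matrix (Fin n) (Fin n) ℝ ×
      Matrix (Fin k) (Fin n) ℝ => 𝒇 p.1 p.2.1 p.2.2) (A, Z, H) := by
  unfold fObj
  fun_prop (disch := exact hC)

variable {X W M C lam lamZ lamM a1 a2} in
lemma tendsto_fObj {ι : Type*} {l : Filter ι} {a z : ι → Matrix (Fin n) (Fin n) ℝ}
    {h : ι → Matrix (Fin k) (Fin n) ℝ} {A Z : Matrix (Fin n) (Fin n) ℝ}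
    {H : Matrix (Fin k) (Fin n) ℝ} (ha : Tendsto a l (𝓝 A)) (hz : Tendsto z l (𝓝 Z))
    (hh : Tendsto h l (𝓝 H)) (hC : trace (H * lap C * Hᵀ) ≠ 0) :
    Tendsto (fun j => 𝒇 (a j) (z j) (h j)) l (𝓝 (𝒇 A Z H)) := by
  have hlim := (continuousAt_fObj X W M C lam lamZ lamM a1 a2 hC).tendsto.comp
    (ha.prodMk_nhds (hz.prodMk_nhds hh))
  exact hlim

lemma fObj_midpoint_fst_le (A B Z : Matrix (Fin n) (Fin n) ℝ) (H : Matrix (Fin k) (Fin n) ℝ) :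
    𝒇 ((1 / 2 : ℝ) • (A + B)) Z H
      ≤ 𝒇 A Z H / 2 + 𝒇 B Z H / 2 - lam / 8 * frob (A - B) ^ 2 := by
  have hfit : X - X * ((1 / 2 : ℝ) • (A + B))
      = (1 / 2 : ℝ) • ((X - X * A) + (X - X * B)) := by
    rw [Matrix.mul_smul, Matrix.mul_add]
    module
  have hprox : (1 / 2 : ℝ) • (A + B) - Z = (1 / 2 : ℝ) • ((A - Z) + (B - Z)) := by module
  have hdiff : A - Z - (B - Z) = A - B := by abel
  have hfit_nonneg := sq_nonneg (frob (X - X * A - (X - X * B)))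
  simp only [fObj, hfit, hprox, frob_sq_midpoint, hdiff]
  linarith

lemma fObj_midpoint_snd_le (hlamZ : 0 ≤ lamZ) (ha1 : 0 ≤ a1)
    (A Z Z' : Matrix (Fin n) (Fin n) ℝ) {H : Matrix (Fin k) (Fin n) ℝ}
    (hC : 0 ≤ trace (H * lap C * Hᵀ)) :
    𝒇 A ((1 / 2 : ℝ) • (Z + Z')) H
      ≤ 𝒇 A Z H / 2 + 𝒇 A Z' H / 2 - lam / 8 * frob (Z - Z') ^ 2 := by
  have hprox : A - (1 / 2 : ℝ) • (Z + Z') = (1 / 2 : ℝ) • ((A - Z') + (A - Z)) := by module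
  have hdiff : A - Z' - (A - Z) = Z - Z' := by abel
  have hl1 : lamZ * ∑ i, ∑ j, |((1 / 2 : ℝ) • (Z + Z')) i j|
      ≤ lamZ * ((∑ i, ∑ j, |Z i j|) / 2 + (∑ i, ∑ j, |Z' i j|) / 2) := by
    gcongr
    simpa using sum_abs_midpoint_mul_le Z Z' (w := fun _ _ => 1) fun _ _ => zero_le_one
  have hlap : a1 * trace (H * lap ((1 / 2 : ℝ) • (Z + Z')) * Hᵀ) / trace (H * lap C * Hᵀ)
      ≤ a1 * trace (H * lap Z * Hᵀ) / trace (H * lap C * Hᵀ) / 2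
        + a1 * trace (H * lap Z' * Hᵀ) / trace (H * lap C * Hᵀ) / 2 := by
    calc _ ≤ a1 * (trace (H * lap Z * Hᵀ) / 2 + trace (H * lap Z' * Hᵀ) / 2)
          / trace (H * lap C * Hᵀ) := by
          gcongr
          exact trace_mul_lap_mul_transpose_midpoint_le H Z Z'
      _ = _ := by ring
  simp only [fObj, hprox, frob_sq_midpoint, hdiff]
  linarith

lemma fObj_add_sq_frob_le_of_minimal_fst {A₀ Z : Matrix (Fin n) (Fin n) ℝ}
    {H : Matrix (Fin k) (Fin n) ℝ} (hmin : ∀ A, 𝒇 A₀ Z H ≤ 𝒇 A Z H)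
    (A : Matrix (Fin n) (Fin n) ℝ) :
    𝒇 A₀ Z H + lam / 4 * frob (A - A₀) ^ 2 ≤ 𝒇 A Z H := by
  linarith [hmin ((1 / 2 : ℝ) • (A + A₀)),
    fObj_midpoint_fst_le X W M C lam lamZ lamM a1 a2 A A₀ Z H]

lemma fObj_add_sq_frob_le_of_minimal_snd (hlamZ : 0 ≤ lamZ) (ha1 : 0 ≤ a1)
    {A Z₀ Z : Matrix (Fin n) (Fin n) ℝ} {H : Matrix (Fin k) (Fin n) ℝ}
    (hC : 0 ≤ trace (H * lap C * Hᵀ)) (hZ₀ : ∀ i, Z₀ i i = 0)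
    (hmin : ∀ Z', (∀ i, Z' i i = 0) → 𝒇 A Z₀ H ≤ 𝒇 A Z' H) (hZ : ∀ i, Z i i = 0) :
    𝒇 A Z₀ H + lam / 4 * frob (Z - Z₀) ^ 2 ≤ 𝒇 A Z H := by
  have hmid : ∀ i, ((1 / 2 : ℝ) • (Z + Z₀)) i i = 0 := fun i => by simp [hZ i, hZ₀ i]
  linarith [hmin _ hmid, fObj_midpoint_snd_le X W M C lam lamZ lamM a1 a2 hlamZ ha1 A Z Z₀ hC]

structure IsDGSLIterates (Aseq Zseq : ℕ → Matrix (Fin n) (Fin n) ℝ)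
    (Hseq : ℕ → Matrix (Fin k) (Fin n) ℝ) : Prop where
  diag_zero : ∀ i, Zseq 0 i i = 0
  orthonormal_zero : Hseq 0 * (Hseq 0)ᵀ = 1
  step_H : ∀ t : ℕ, Hseq (t + 1) * (Hseq (t + 1))ᵀ = 1 ∧
    ∀ H : Matrix (Fin k) (Fin n) ℝ, H * Hᵀ = 1 →
      𝒇 (Aseq t) (Zseq t) (Hseq (t + 1)) ≤ 𝒇 (Aseq t) (Zseq t) H
  step_A : ∀ (t : ℕ) (A : Matrix (Fin n) (Fin n) ℝ),
    𝒇 (Aseq (t + 1)) (Zseq t) (Hseq (t + 1)) ≤ 𝒇 A (Zseq t) (Hseq (t + 1))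
  step_Z : ∀ t : ℕ, (∀ i, Zseq (t + 1) i i = 0) ∧
    ∀ Z : Matrix (Fin n) (Fin n) ℝ, (∀ i, Z i i = 0) →
      𝒇 (Aseq (t + 1)) (Zseq (t + 1)) (Hseq (t + 1)) ≤ 𝒇 (Aseq (t + 1)) Z (Hseq (t + 1))

namespace IsDGSLIterates

variable {X W M C lam lamZ lamM a1 a2} {Aseq Zseq : ℕ → Matrix (Fin n) (Fin n) ℝ}
  {Hseq : ℕ → Matrix (Fin k) (Fin n) ℝ}
  (hs : IsDGSLIterates X W M C lam lamZ lamM a1 a2 Aseq Zseq Hseq)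
include hs

lemma orthonormal (t : ℕ) : Hseq t * (Hseq t)ᵀ = 1 := by
  cases t with
  | zero => exact hs.orthonormal_zero
  | succ t => exact (hs.step_H t).1

lemma diag_eq_zero (t : ℕ) (i : Fin n) : Zseq t i i = 0 := by
  cases t with
  | zero => exact hs.diag_zero i
  | succ t => exact (hs.step_Z t).1 i

lemma antitone_fObj : Antitone fun t => 𝒇 (Aseq t) (Zseq t) (Hseq t) :=
  antitone_nat_of_succ_le fun t => by
    linarith [(hs.step_H t).2 _ (hs.orthonormal t), hs.step_A t (Aseq t),
      (hs.step_Z t).2 _ (hs.diag_eq_zero t)]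

lemma sq_frob_sub_succ_fst_le (t : ℕ) :
    lam / 4 * frob (Aseq t - Aseq (t + 1)) ^ 2
      ≤ 𝒇 (Aseq t) (Zseq t) (Hseq t) - 𝒇 (Aseq (t + 1)) (Zseq (t + 1)) (Hseq (t + 1)) := by
  linarith [(hs.step_H t).2 _ (hs.orthonormal t),
    fObj_add_sq_frob_le_of_minimal_fst X W M C lam lamZ lamM a1 a2 (hs.step_A t) (Aseq t),
    (hs.step_Z t).2 _ (hs.diag_eq_zero t)]

lemma sq_frob_sub_succ_snd_le (hlamZ : 0 ≤ lamZ) (ha1 : 0 ≤ a1)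
    (hC : ∀ H : Matrix (Fin k) (Fin n) ℝ, H * Hᵀ = 1 → 0 < trace (H * lap C * Hᵀ)) (t : ℕ) :
    lam / 4 * frob (Zseq t - Zseq (t + 1)) ^ 2
      ≤ 𝒇 (Aseq t) (Zseq t) (Hseq t) - 𝒇 (Aseq (t + 1)) (Zseq (t + 1)) (Hseq (t + 1)) := by
  linarith [(hs.step_H t).2 _ (hs.orthonormal t), hs.step_A t (Aseq t),
    fObj_add_sq_frob_le_of_minimal_snd X W M C lam lamZ lamM a1 a2 hlamZ ha1
      (hC _ (hs.orthonormal (t + 1))).le (hs.diag_eq_zero (t + 1)) (hs.step_Z t).2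
      (hs.diag_eq_zero t)]

end IsDGSLIterates

end Objective

theorem dgsl_limit_points_are_coordinatewise_minimizers_general (n k d : ℕ)
    (X : Matrix (Fin d) (Fin n) ℝ) (W M C : Matrix (Fin n) (Fin n) ℝ)
    (lam lamZ lamM a1 a2 : ℝ) (hlam : 0 < lam) (hlamZ : 0 < lamZ)
    (ha1 : 0 < a1)
    (hC : ∀ H : Matrix (Fin k) (Fin n) ℝ, H * Hᵀ = 1 → 0 < trace (H * lap C * Hᵀ))
    (Aseq Zseq : ℕ → Matrix (Fin n) (Fin n) ℝ)
    (Hseq : ℕ → Matrix (Fin k) (Fin n) ℝ)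
    (hZ0 : ∀ i, Zseq 0 i i = 0) (hH0 : Hseq 0 * (Hseq 0)ᵀ = 1)
    (hHstep : ∀ t : ℕ, Hseq (t + 1) * (Hseq (t + 1))ᵀ = 1 ∧
      ∀ H : Matrix (Fin k) (Fin n) ℝ, H * Hᵀ = 1 →
        fObj X W M C lam lamZ lamM a1 a2 (Aseq t) (Zseq t) (Hseq (t + 1))
          ≤ fObj X W M C lam lamZ lamM a1 a2 (Aseq t) (Zseq t) H)
    (hAstep : ∀ (t : ℕ) (A : Matrix (Fin n) (Fin n) ℝ),
      fObj X W M C lam lamZ lamM a1 a2 (Aseq (t + 1)) (Zseq t) (Hseq (t + 1))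
        ≤ fObj X W M C lam lamZ lamM a1 a2 A (Zseq t) (Hseq (t + 1)))
    (hZstep : ∀ t : ℕ, (∀ i, Zseq (t + 1) i i = 0) ∧
      ∀ Z : Matrix (Fin n) (Fin n) ℝ, (∀ i, Z i i = 0) →
        fObj X W M C lam lamZ lamM a1 a2 (Aseq (t + 1)) (Zseq (t + 1)) (Hseq (t + 1))
          ≤ fObj X W M C lam lamZ lamM a1 a2 (Aseq (t + 1)) Z (Hseq (t + 1)))
    (Astar Zstar : Matrix (Fin n) (Fin n) ℝ) (Hstar : Matrix (Fin k) (Fin n) ℝ)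
    (φ : ℕ → ℕ) (hφ : StrictMono φ)
    (hAlim : Tendsto (fun j : ℕ => frob (Aseq (φ j) - Astar)) atTop (𝓝 0))
    (hZlim : Tendsto (fun j : ℕ => frob (Zseq (φ j) - Zstar)) atTop (𝓝 0))
    (hHlim : Tendsto (fun j : ℕ => frob (Hseq (φ j) - Hstar)) atTop (𝓝 0)) :
    (∀ i, Zstar i i = 0) ∧ Hstar * Hstarᵀ = 1 ∧
      (∀ H : Matrix (Fin k) (Fin n) ℝ, H * Hᵀ = 1 →
        fObj X W M C lam lamZ lamM a1 a2 Astar Zstar Hstar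
          ≤ fObj X W M C lam lamZ lamM a1 a2 Astar Zstar H) ∧
      (∀ A : Matrix (Fin n) (Fin n) ℝ,
        fObj X W M C lam lamZ lamM a1 a2 Astar Zstar Hstar
          ≤ fObj X W M C lam lamZ lamM a1 a2 A Zstar Hstar) ∧
      ∀ Z : Matrix (Fin n) (Fin n) ℝ, (∀ i, Z i i = 0) →
        fObj X W M C lam lamZ lamM a1 a2 Astar Zstar Hstar
          ≤ fObj X W M C lam lamZ lamM a1 a2 Astar Z Hstar := by
  have hs : IsDGSLIterates X W M C lam lamZ lamM a1 a2 Aseq Zseq Hseq :=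
    ⟨hZ0, hH0, hHstep, hAstep, hZstep⟩
  have hA := tendsto_of_tendsto_frob_sub hAlim
  have hZ := tendsto_of_tendsto_frob_sub hZlim
  have hH := tendsto_of_tendsto_frob_sub hHlim
  have hHstar : Hstar * Hstarᵀ = 1 :=
    isClosed_orthonormal.mem_of_tendsto hH (.of_forall fun j => hs.orthonormal (φ j))
  have hτ := (hC Hstar hHstar).ne'
  have hF := (tendsto_iff_tendsto_subseq_of_antitone hs.antitone_fObj hφ.tendsto_atTop).2
    (tendsto_fObj hA hZ hH hτ)
  obtain ⟨ψ, hψ_top, hψ⟩ := hφ.exists_add_one_eq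
  have hA₁ : Tendsto (fun j => Aseq (ψ j + 1)) atTop (𝓝 Astar) := by
    simpa only [hψ, Function.comp_def] using hA.comp (tendsto_add_atTop_nat 1)
  have hZ₁ : Tendsto (fun j => Zseq (ψ j + 1)) atTop (𝓝 Zstar) := by
    simpa only [hψ, Function.comp_def] using hZ.comp (tendsto_add_atTop_nat 1)
  have hH₁ : Tendsto (fun j => Hseq (ψ j + 1)) atTop (𝓝 Hstar) := by
    simpa only [hψ, Function.comp_def] using hH.comp (tendsto_add_atTop_nat 1)
  have hA₀ := tendsto_of_tendsto_sub_succ (tendsto_sub_succ_of_sq_frob_le (by positivity) hF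
    hs.sq_frob_sub_succ_fst_le) hψ_top hA₁
  have hZ₀ := tendsto_of_tendsto_sub_succ (tendsto_sub_succ_of_sq_frob_le (by positivity) hF
    (hs.sq_frob_sub_succ_snd_le hlamZ.le ha1.le hC)) hψ_top hZ₁
  refine ⟨isClosed_diag_eq_zero.mem_of_tendsto hZ (.of_forall fun j => hs.diag_eq_zero (φ j)),
    hHstar, fun H hHH => ?_, fun A => ?_, fun Z hZZ => ?_⟩
  · exact le_of_tendsto_of_tendsto' (tendsto_fObj hA₀ hZ₀ hH₁ hτ)
      (tendsto_fObj hA₀ hZ₀ tendsto_const_nhds (hC H hHH).ne')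
      fun j => (hs.step_H (ψ j)).2 H hHH
  · exact le_of_tendsto_of_tendsto' (tendsto_fObj hA₁ hZ₀ hH₁ hτ)
      (tendsto_fObj tendsto_const_nhds hZ₀ hH₁ hτ) fun j => hs.step_A (ψ j) A
  · exact le_of_tendsto_of_tendsto' (tendsto_fObj hA₁ hZ₁ hH₁ hτ)
      (tendsto_fObj hA₁ tendsto_const_nhds hH₁ hτ) fun j => (hs.step_Z (ψ j)).2 Z hZZ

theorem dgsl_limit_points_are_coordinatewise_minimizers (n k d : ℕ) (hn : 0 < n) (hk : 0 < k) (hd : 0 < d)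
    (X : Matrix (Fin d) (Fin n) ℝ) (W M C : Matrix (Fin n) (Fin n) ℝ)
    (lam lamZ lamM a1 a2 : ℝ) (hlam : 0 < lam) (hlamZ : 0 < lamZ)
    (hlamM : 0 < lamM) (ha1 : 0 < a1) (ha2 : 0 < a2)
    (hC : ∀ H : Matrix (Fin k) (Fin n) ℝ, H * Hᵀ = 1 → 0 < trace (H * lap C * Hᵀ))
    (Aseq Zseq : ℕ → Matrix (Fin n) (Fin n) ℝ)
    (Hseq : ℕ → Matrix (Fin k) (Fin n) ℝ)
    (hZ0 : ∀ i, Zseq 0 i i = 0) (hH0 : Hseq 0 * (Hseq 0)ᵀ = 1)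
    (hHstep : ∀ t : ℕ, Hseq (t + 1) * (Hseq (t + 1))ᵀ = 1 ∧
      ∀ H : Matrix (Fin k) (Fin n) ℝ, H * Hᵀ = 1 →
        fObj X W M C lam lamZ lamM a1 a2 (Aseq t) (Zseq t) (Hseq (t + 1))
          ≤ fObj X W M C lam lamZ lamM a1 a2 (Aseq t) (Zseq t) H)
    (hAstep : ∀ (t : ℕ) (A : Matrix (Fin n) (Fin n) ℝ),
      fObj X W M C lam lamZ lamM a1 a2 (Aseq (t + 1)) (Zseq t) (Hseq (t + 1))
        ≤ fObj X W M C lam lamZ lamM a1 a2 A (Zseq t) (Hseq (t + 1)))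
    (hZstep : ∀ t : ℕ, (∀ i, Zseq (t + 1) i i = 0) ∧
      ∀ Z : Matrix (Fin n) (Fin n) ℝ, (∀ i, Z i i = 0) →
        fObj X W M C lam lamZ lamM a1 a2 (Aseq (t + 1)) (Zseq (t + 1)) (Hseq (t + 1))
          ≤ fObj X W M C lam lamZ lamM a1 a2 (Aseq (t + 1)) Z (Hseq (t + 1)))
    (Astar Zstar : Matrix (Fin n) (Fin n) ℝ) (Hstar : Matrix (Fin k) (Fin n) ℝ)
    (φ : ℕ → ℕ) (hφ : StrictMono φ)
    (hAlim : Tendsto (fun j : ℕ => frob (Aseq (φ j) - Astar)) atTop (𝓝 0))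
    (hZlim : Tendsto (fun j : ℕ => frob (Zseq (φ j) - Zstar)) atTop (𝓝 0))
    (hHlim : Tendsto (fun j : ℕ => frob (Hseq (φ j) - Hstar)) atTop (𝓝 0)) :
    (∀ i, Zstar i i = 0) ∧ Hstar * Hstarᵀ = 1 ∧
      (∀ H : Matrix (Fin k) (Fin n) ℝ, H * Hᵀ = 1 →
        fObj X W M C lam lamZ lamM a1 a2 Astar Zstar Hstar
          ≤ fObj X W M C lam lamZ lamM a1 a2 Astar Zstar H) ∧
      (∀ A : Matrix (Fin n) (Fin n) ℝ,
        fObj X W M C lam lamZ lamM a1 a2 Astar Zstar Hstar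
          ≤ fObj X W M C lam lamZ lamM a1 a2 A Zstar Hstar) ∧
      ∀ Z : Matrix (Fin n) (Fin n) ℝ, (∀ i, Z i i = 0) →
        fObj X W M C lam lamZ lamM a1 a2 Astar Zstar Hstar
          ≤ fObj X W M C lam lamZ lamM a1 a2 Astar Z Hstar :=
  dgsl_limit_points_are_coordinatewise_minimizers_general n k d X W M C lam lamZ lamM a1 a2 hlam
    hlamZ ha1 hC Aseq Zseq Hseq hZ0 hH0 hHstep hAstep hZstep Astar Zstar Hstar φ hφ hAlim hZlim
    hHlim
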